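/- Let X = (X_1, X_2, ...) be an exchangeable sequence of S-valued random variables for a countable set S. Then for every s ∈ S, almost surely the set {i : X_i = s} is either empty, a singleton, or infinite. -/

import Mathlib

/-!
If the set of indices hitting `B` is a given set `T` containing `a`, then after composing with the
transposition of `a` and a fresh index `b ∉ T` it is a different set, containing `b`. Varying `b`
over infinitely many indices outside `T` gives infinitely many pairwise disjoint events which, by
exchangeability, all have the probability of `{i | X i ∈ B} = T`; under a finite measure that
probability must vanish. Summing over the countably many nonempty finite `T`, the set
`{i | X i = s}` is almost surely empty or infinite.
-/

open MeasureTheory Set Function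

lemma MeasureTheory.eq_zero_of_pairwise_disjoint_of_forall_measure_eq {Ω : Type*}
    [MeasurableSpace Ω] {μ : Measure Ω} [IsFiniteMeasure μ] {E : ℕ → Set Ω}
    (hE : ∀ n, MeasurableSet (E n)) (hdisj : Pairwise (Disjoint on E)) {c : ENNReal}
    (hc : ∀ n, μ (E n) = c) : c = 0 := by
  by_contra hc0
  have hsum : ∑' n, μ (E n) = ⊤ := by
    simp only [hc, ENNReal.tsum_const_eq_top_of_ne_zero hc0]
  rw [← measure_iUnion hdisj hE] at hsum
  exact measure_ne_top μ _ hsum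

section Exchangeable

variable {ι α : Type*} [MeasurableSpace α]

def IsExchangeable (ν : Measure (ι → α)) : Prop :=
  ∀ σ : Equiv.Perm ι, {i | σ i ≠ i}.Finite → ν.map (fun y i => y (σ i)) = ν

lemma IsExchangeable.map_swap [DecidableEq ι] {ν : Measure (ι → α)} (hν : IsExchangeable ν)
    (a b : ι) : ν.map (fun y i => y (Equiv.swap a b i)) = ν :=
  hν _ <| (toFinite {a, b}).subset fun _ hi => (Equiv.swap_apply_ne_self_iff.mp hi).2

lemma measurableSet_setOf_indices_eq [Countable ι] {B : Set α} (hB : MeasurableSet B)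
    (T : Set ι) : MeasurableSet {y : ι → α | {i | y i ∈ B} = T} := by
  have hiInter : {y : ι → α | {i | y i ∈ B} = T} = ⋂ i, {y | y i ∈ B ↔ i ∈ T} := by
    ext y
    simp only [mem_iInter, mem_ofPred_eq, Set.ext_iff]
  rw [hiInter]
  exact MeasurableSet.iInter fun i => (measurable_pi_apply i hB).iff (MeasurableSet.const _)

variable [Countable ι] {ν : Measure (ι → α)} {B : Set α}

lemma IsExchangeable.measure_setOf_indices_eq_eq_zero [IsFiniteMeasure ν]
    (hν : IsExchangeable ν) (hB : MeasurableSet B) {T : Set ι} (hT : T.Nonempty)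
    (hTc : Tᶜ.Infinite) : ν {y | {i | y i ∈ B} = T} = 0 := by
  classical
  obtain ⟨a, ha⟩ := hT
  set A := {y : ι → α | {i | y i ∈ B} = T}
  have hA : MeasurableSet A := measurableSet_setOf_indices_eq hB T
  let b : ℕ → ι := fun n => hTc.natEmbedding _ n
  have hb_inj : Injective b := Subtype.val_injective.comp (Embedding.injective _)
  have hb_notMem (n : ℕ) : b n ∉ T := (hTc.natEmbedding _ n).2
  let swapAt (n : ℕ) : (ι → α) → (ι → α) := fun y i => y (Equiv.swap a (b n) i)
  have hswap_meas (n : ℕ) : Measurable (swapAt n) := by fun_prop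
  refine eq_zero_of_pairwise_disjoint_of_forall_measure_eq (μ := ν)
    (E := fun n => swapAt n ⁻¹' A) (fun n => hswap_meas n hA) ?_ fun n => ?_
  · intro n m hnm
    refine disjoint_left.mpr fun y hn hm => hb_notMem n ?_
    have hbn : y (b n) ∈ B := by
      simpa [swapAt] using (show a ∈ {i | y (Equiv.swap a (b n) i) ∈ B} from hn.symm ▸ ha)
    have hfix : Equiv.swap a (b m) (b n) = b n :=
      Equiv.swap_apply_of_ne_of_ne (fun h => hb_notMem n (h ▸ ha)) (hb_inj.ne hnm)
    rw [← (show {i | y (Equiv.swap a (b m) i) ∈ B} = T from hm)]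
    simpa [hfix] using hbn
  · rw [← Measure.map_apply (hswap_meas n) hA, hν.map_swap]

lemma IsExchangeable.ae_indices_empty_or_infinite [Infinite ι] [IsFiniteMeasure ν]
    (hν : IsExchangeable ν) (hB : MeasurableSet B) :
    ∀ᵐ y ∂ν, {i | y i ∈ B} = ∅ ∨ {i | y i ∈ B}.Infinite := by
  have hbad : {y : ι → α | ¬({i | y i ∈ B} = ∅ ∨ {i | y i ∈ B}.Infinite)} ⊆
      ⋃ (T : Finset ι) (_ : (T : Set ι).Nonempty), {y | {i | y i ∈ B} = T} := by
    intro y hy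
    simp only [mem_ofPred_eq, not_or, not_infinite] at hy
    obtain ⟨hne, hfin⟩ := hy
    exact mem_iUnion₂.mpr ⟨hfin.toFinset, by simpa [nonempty_iff_ne_empty] using hne, by simp⟩
  refine ae_iff.mpr (measure_mono_null hbad (measure_iUnion_null fun T =>
    measure_iUnion_null fun hT => ?_))
  exact hν.measure_setOf_indices_eq_eq_zero hB hT T.finite_toSet.infinite_compl

end Exchangeable

theorem exchangeable_occurrence_trichotomy_general
    {Ω S : Type*} [MeasurableSpace Ω] [MeasurableSpace S]
    [MeasurableSingletonClass S]
    (μ : Measure Ω) [IsProbabilityMeasure μ]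
    (X : ℕ → Ω → S) (hmeas : ∀ i, Measurable (X i))
    (hexch : ∀ σ : Equiv.Perm ℕ, {i | σ i ≠ i}.Finite →
      μ.map (fun ω => fun i => X (σ i) ω) = μ.map (fun ω => fun i => X i ω)) :
    ∀ s : S, ∀ᵐ ω ∂μ,
      ({i : ℕ | X i ω = s} = ∅) ∨ (∃ j : ℕ, {i : ℕ | X i ω = s} = {j}) ∨
        {i : ℕ | X i ω = s}.Infinite := by
  intro s
  have hX : Measurable fun ω i => X i ω := measurable_pi_lambda _ hmeas
  have hν : IsExchangeable (μ.map fun ω i => X i ω) := fun σ hσ => by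
    rw [Measure.map_map (by fun_prop) hX]
    exact hexch σ hσ
  filter_upwards [ae_of_ae_map hX.aemeasurable
    (hν.ae_indices_empty_or_infinite (measurableSet_singleton s))] with ω hω
  exact hω.imp_right Or.inr

/-- For an infinite exchangeable sequence of random variables with values
in a countable set `S`, for every `s ∈ S`, almost surely the set of indices `i` with
`X i = s` is empty, a singleton, or infinite. -/
theorem exchangeable_occurrence_trichotomy
    {Ω S : Type*} [MeasurableSpace Ω] [Countable S] [MeasurableSpace S]
    [MeasurableSingletonClass S]
    (μ : Measure Ω) [IsProbabilityMeasure μ]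
    (X : ℕ → Ω → S) (hmeas : ∀ i, Measurable (X i))
    (hexch : ∀ σ : Equiv.Perm ℕ, {i | σ i ≠ i}.Finite →
      μ.map (fun ω => fun i => X (σ i) ω) = μ.map (fun ω => fun i => X i ω)) :
    ∀ s : S, ∀ᵐ ω ∂μ,
      ({i : ℕ | X i ω = s} = ∅) ∨ (∃ j : ℕ, {i : ℕ | X i ω = s} = {j}) ∨
        {i : ℕ | X i ω = s}.Infinite :=
  exchangeable_occurrence_trichotomy_general μ X hmeas hexch
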